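/- For any n ≥ 0 and any signs ε_R ∈ {-1,1}, the Lebesgue measure of {p ∈ [0,1)² : ∑_{|R|=2^{-n}} ε_R h_R(p) = n+1-2k} equals 2^{-(n+1)}·C(n+1,k) for every 0 ≤ k ≤ n+1. -/

import Mathlib

/-!
On the dyadic cell of side `2^{-(n+1)}` with indices `(a, b)`, every Haar function `h_R` with
`|R| = 2^{-n}` is either `0` or a product of two Rademacher functions, so the signed sum is a sum
of `n + 1` signs; the `j`-th one is the `j`-th binary digit of `b`, flipped according to `ε`, the
digits of `a` and the digits of `b` above position `j`. Such a triangular twist of the digits is a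
bijection from `{0, …, 2^{n+1} - 1}` onto the subsets of `{0, …, n}`, so for each `a` exactly
`C(n+1, k)` indices `b` give `k` minus signs. The level set is a union of `2^{n+1} C(n+1, k)`
cells of area `4^{-(n+1)}`.
-/

open MeasureTheory Finset

noncomputable section

/-- The dyadic interval `[m·2^{-k}, (m+1)·2^{-k})`. -/
def dyadicI (k m : ℕ) : Set ℝ :=
  Set.Ico ((m : ℝ) * (2:ℝ)^(-(k:ℤ))) (((m : ℝ) + 1) * (2:ℝ)^(-(k:ℤ)))

/-- The Haar function of the dyadic interval `[m·2^{-k}, (m+1)·2^{-k})`: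
`-1` on the left half, `+1` on the right half, `0` outside. -/
def haarI (k m : ℕ) (x : ℝ) : ℝ :=
  if x ∈ Set.Ico ((m : ℝ) * (2:ℝ)^(-(k:ℤ))) (((m : ℝ) + 1/2) * (2:ℝ)^(-(k:ℤ))) then -1
  else if x ∈ Set.Ico (((m : ℝ) + 1/2) * (2:ℝ)^(-(k:ℤ))) (((m : ℝ) + 1) * (2:ℝ)^(-(k:ℤ))) then 1
  else 0

/-- The Haar function of the dyadic rectangle `[m·2^{-k},(m+1)·2^{-k}) × [m'·2^{-j},(m'+1)·2^{-j})`. -/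
def haarR (k m j m' : ℕ) (p : ℝ × ℝ) : ℝ := haarI k m p.1 * haarI j m' p.2

/-- The signed small ball sum `∑_{|R| = 2^{-n}} ε_R h_R`, where the rectangle of the layer `k`
with horizontal index `m` and vertical index `m'` carries the sign `ε k m m'`. -/
def signedSum (n : ℕ) (ε : ℕ → ℕ → ℕ → ℝ) (p : ℝ × ℝ) : ℝ :=
  ∑ k ∈ Finset.range (n+1), ∑ m ∈ Finset.range (2^k), ∑ m' ∈ Finset.range (2^(n-k)),
    ε k m m' * haarR k m (n-k) m' p

/-- `rad j t = 1` if the `j`-th binary digit `⌊2^j t⌋ mod 2` of `t` is `1`, `-1` otherwise. -/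
def rad (j : ℕ) (t : ℝ) : ℝ := if ⌊(2:ℝ)^j * t⌋ % 2 = 1 then 1 else -1

lemma two_zpow_neg (k : ℕ) : (2 : ℝ) ^ (-(k : ℤ)) = ((2 : ℝ) ^ k)⁻¹ := by
  rw [zpow_neg, zpow_natCast]

lemma mem_dyadicI_iff {k m : ℕ} {x : ℝ} : x ∈ dyadicI k m ↔ ⌊2 ^ k * x⌋ = m := by
  have h : (0 : ℝ) < 2 ^ k := by positivity
  rw [dyadicI, Set.mem_Ico, two_zpow_neg, Int.floor_eq_iff, ← div_eq_mul_inv, ← div_eq_mul_inv,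
    div_le_iff₀ h, lt_div_iff₀ h, mul_comm x]
  push_cast
  rfl

lemma floor_two_pow_mul_eq_div (x : ℝ) (k d : ℕ) :
    ⌊2 ^ k * x⌋ = ⌊2 ^ (k + d) * x⌋ / 2 ^ d := by
  have h : (2 : ℝ) ^ k * x = 2 ^ (k + d) * x / ((2 ^ d : ℕ) : ℝ) := by
    push_cast
    rw [pow_add]
    field_simp
  rw [h, Int.floor_div_natCast]
  push_cast
  rfl

lemma mem_dyadicI_iff_of_mem_dyadicI {N j a m : ℕ} {x : ℝ} (hx : x ∈ dyadicI N a)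
    (hj : j ≤ N) :
    x ∈ dyadicI j m ↔ m = a / 2 ^ (N - j) := by
  rw [mem_dyadicI_iff] at hx ⊢
  rw [floor_two_pow_mul_eq_div x j (N - j), Nat.add_sub_cancel' hj, hx, eq_comm]
  norm_cast

lemma rad_succ_of_mem_dyadicI {N j a : ℕ} {x : ℝ} (hx : x ∈ dyadicI N a) (hj : j < N) :
    rad (j + 1) x = if a.testBit (N - (j + 1)) then 1 else -1 := by
  rw [mem_dyadicI_iff] at hx
  rw [rad, floor_two_pow_mul_eq_div x (j + 1) (N - (j + 1)), Nat.add_sub_cancel' hj, hx,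
    Nat.testBit_eq_decide_div_mod_eq]
  norm_cast
  simp

lemma haarI_eq_indicator (k m : ℕ) : haarI k m = (dyadicI k m).indicator (rad (k + 1)) := by
  classical
  ext x
  have hleft : Set.Ico ((m : ℝ) * 2 ^ (-(k : ℤ))) ((m + 1 / 2) * 2 ^ (-(k : ℤ)))
      = dyadicI (k + 1) (2 * m) := by
    rw [dyadicI, two_zpow_neg, two_zpow_neg, pow_succ]
    push_cast
    congr 1 <;> field_simp
  have hright : Set.Ico (((m : ℝ) + 1 / 2) * 2 ^ (-(k : ℤ))) ((m + 1) * 2 ^ (-(k : ℤ)))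
      = dyadicI (k + 1) (2 * m + 1) := by
    rw [dyadicI, two_zpow_neg, two_zpow_neg, pow_succ]
    push_cast
    congr 1 <;> field_simp
    ring
  simp only [haarI, Set.indicator_apply, hleft, hright, mem_dyadicI_iff, rad,
    floor_two_pow_mul_eq_div x k 1]
  push_cast
  split_ifs <;> first | rfl | omega

def signOf (t : Bool) : ℝ := (-1) ^ t.toNat

lemma sum_signOf {ι : Type*} (s : Finset ι) (t : ι → Bool) :
    ∑ i ∈ s, signOf (t i) = #s - 2 * #{i ∈ s | t i} := by
  have h : ∀ i, signOf (t i) = 1 - 2 * if t i then 1 else 0 := fun i => by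
    cases t i <;> norm_num [signOf]
  simp only [h, sum_sub_distrib, ← mul_sum, sum_boole, sum_const, nsmul_eq_mul, mul_one]

def twistedBits (N : ℕ) (c : ℕ → ℕ → Bool) (b : ℕ) : Finset ℕ :=
  {i ∈ range N | b.testBit i ^^ c i (b / 2 ^ (i + 1))}

lemma div_two_pow_eq_of_div_two_pow_succ_eq {b b' k : ℕ} (h : b / 2 ^ (k + 1) = b' / 2 ^ (k + 1))
    (hk : b.testBit k = b'.testBit k) : b / 2 ^ k = b' / 2 ^ k := by
  rw [Nat.testBit_eq_decide_div_mod_eq, Nat.testBit_eq_decide_div_mod_eq, decide_eq_decide] at hk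
  rw [pow_succ, ← Nat.div_div_eq_div_mul, ← Nat.div_div_eq_div_mul] at h
  omega

/- The twist at digit `k` only depends on the digits above `k`, so `b` is recovered from
`twistedBits N c b` digit by digit, from the top down. -/
lemma twistedBits_injOn (N : ℕ) (c : ℕ → ℕ → Bool) :
    Set.InjOn (twistedBits N c) (range (2 ^ N)) := by
  intro b hb b' hb' h
  rw [coe_range, Set.mem_Iio] at hb hb'
  suffices ∀ m ≤ N, b / 2 ^ m = b' / 2 ^ m by simpa using this 0 (Nat.zero_le N)
  intro m hm
  induction hm using Nat.decreasingInduction with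
  | self => rw [Nat.div_eq_of_lt hb, Nat.div_eq_of_lt hb']
  | of_succ k hk ih =>
    have hmem : k ∈ twistedBits N c b ↔ k ∈ twistedBits N c b' := by rw [h]
    simp only [twistedBits, mem_filter, mem_range, hk, true_and, ih, ← Bool.eq_iff_iff,
      Bool.xor_left_inj] at hmem
    exact div_two_pow_eq_of_div_two_pow_succ_eq ih hmem

lemma card_filter_card_twistedBits_eq_choose (N k : ℕ) (c : ℕ → ℕ → Bool) :
    #{b ∈ range (2 ^ N) | #(twistedBits N c b) = k} = N.choose k := by
  classical
  have hinj := twistedBits_injOn N c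
  have himage : (range (2 ^ N)).image (twistedBits N c) = (range N).powerset := by
    refine eq_of_subset_of_card_le (fun s hs => ?_) ?_
    · obtain ⟨b, -, rfl⟩ := mem_image.mp hs
      exact mem_powerset.mpr (filter_subset _ _)
    · rw [card_powerset, card_image_of_injOn hinj, card_range, card_range]
  have hchoose : #(powersetCard k (range N)) = N.choose k := by
    rw [card_powersetCard, card_range]
  rw [← hchoose, powersetCard_eq_filter, ← himage, filter_image,
    card_image_of_injOn (hinj.mono (filter_subset _ _))]

def bitTwist (n : ℕ) (ε : ℕ → ℕ → ℕ → ℝ) (a j h : ℕ) : Bool :=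
  decide (ε j (a / 2 ^ (n + 1 - j)) h = -1) ^^ a.testBit (n - j)

lemma mul_sign_mul_sign_eq_signOf {e : ℝ} (he : e = 1 ∨ e = -1) (s t : Bool) :
    e * ((if s then 1 else -1) * (if t then 1 else -1)) = signOf (t ^^ (decide (e = -1) ^^ s)) := by
  rcases he with rfl | rfl <;> cases s <;> cases t <;> norm_num [signOf]

lemma signedSum_eq_of_mem_dyadicI {n a b : ℕ} {ε : ℕ → ℕ → ℕ → ℝ}
    (hε : ∀ j m m', ε j m m' = 1 ∨ ε j m m' = -1)
    (ha : a < 2 ^ (n + 1)) (hb : b < 2 ^ (n + 1))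
    {p : ℝ × ℝ} (hpa : p.1 ∈ dyadicI (n + 1) a) (hpb : p.2 ∈ dyadicI (n + 1) b) :
    signedSum n ε p = n + 1 - 2 * #(twistedBits (n + 1) (bitTwist n ε a) b) := by
  classical
  have hterm : ∀ j ∈ range (n + 1), ∑ m ∈ range (2 ^ j), ∑ m' ∈ range (2 ^ (n - j)),
      ε j m m' * haarR j m (n - j) m' p
        = signOf (b.testBit j ^^ bitTwist n ε a j (b / 2 ^ (j + 1))) := by
    intro j hj
    have hjn : j ≤ n := Nat.lt_succ_iff.mp (mem_range.mp hj)
    have hA : a / 2 ^ (n + 1 - j) < 2 ^ j := by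
      rw [Nat.div_lt_iff_lt_mul (by positivity), ← pow_add, Nat.add_sub_cancel' (by omega)]
      exact ha
    have hB : b / 2 ^ (j + 1) < 2 ^ (n - j) := by
      rw [Nat.div_lt_iff_lt_mul (by positivity), ← pow_add, show n - j + (j + 1) = n + 1 by omega]
      exact hb
    have e1 : n + 1 - (n - j) = j + 1 := by omega
    have e2 : n + 1 - (j + 1) = n - j := by omega
    have e3 : n + 1 - (n - j + 1) = j := by omega
    simp only [haarR, haarI_eq_indicator, Set.indicator_apply,
      mem_dyadicI_iff_of_mem_dyadicI hpa (by omega : j ≤ n + 1),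
      mem_dyadicI_iff_of_mem_dyadicI hpb (by omega : n - j ≤ n + 1), e1, mul_ite, ite_mul,
      mul_zero, zero_mul, sum_ite_eq', mem_range, hA, hB, if_true]
    rw [rad_succ_of_mem_dyadicI hpa (by omega), rad_succ_of_mem_dyadicI hpb (by omega), e2, e3]
    exact mul_sign_mul_sign_eq_signOf (hε _ _ _) _ _
  rw [signedSum, sum_congr rfl hterm, sum_signOf, card_range]
  push_cast
  rfl

lemma mem_Ico_zero_one_iff_exists_mem_dyadicI (N : ℕ) {x : ℝ} :
    x ∈ Set.Ico 0 1 ↔ ∃ a < 2 ^ N, x ∈ dyadicI N a := by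
  have h : (0 : ℝ) < 2 ^ N := by positivity
  simp only [mem_dyadicI_iff]
  constructor
  · rintro ⟨h0, h1⟩
    refine ⟨⌊2 ^ N * x⌋₊, ?_, (Int.natCast_floor_eq_floor (by positivity)).symm⟩
    rw [Nat.floor_lt (by positivity)]
    push_cast
    nlinarith
  · rintro ⟨a, ha, hx⟩
    have h0 : 0 ≤ ⌊2 ^ N * x⌋ := hx ▸ Int.natCast_nonneg a
    have h1 : ⌊2 ^ N * x⌋ < 2 ^ N := by rw [hx]; exact_mod_cast ha
    rw [Int.floor_nonneg] at h0
    rw [Int.floor_lt] at h1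
    push_cast at h1
    constructor <;> nlinarith

lemma setOf_unitSquare_eq_biUnion (N : ℕ) (P : ℝ × ℝ → Prop) (Q : ℕ × ℕ → Prop)
    [DecidablePred Q]
    (h : ∀ a < 2 ^ N, ∀ b < 2 ^ N, ∀ p ∈ dyadicI N a ×ˢ dyadicI N b, P p ↔ Q (a, b)) :
    {p : ℝ × ℝ | p.1 ∈ Set.Ico 0 1 ∧ p.2 ∈ Set.Ico 0 1 ∧ P p}
      = ⋃ ab ∈ {ab ∈ range (2 ^ N) ×ˢ range (2 ^ N) | Q ab},
          dyadicI N ab.1 ×ˢ dyadicI N ab.2 := by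
  ext p
  simp only [Set.mem_ofPred_eq, Set.mem_iUnion, mem_filter, mem_product, mem_range, exists_prop,
    Prod.exists, Set.mem_prod, mem_Ico_zero_one_iff_exists_mem_dyadicI N]
  constructor
  · rintro ⟨⟨a, ha, hpa⟩, ⟨b, hb, hpb⟩, hP⟩
    exact ⟨a, b, ⟨⟨ha, hb⟩, (h a ha b hb p ⟨hpa, hpb⟩).mp hP⟩, hpa, hpb⟩
  · rintro ⟨a, b, ⟨⟨ha, hb⟩, hQ⟩, hpa, hpb⟩
    exact ⟨⟨a, ha, hpa⟩, ⟨b, hb, hpb⟩, (h a ha b hb p ⟨hpa, hpb⟩).mpr hQ⟩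

lemma disjoint_dyadicI {k m m' : ℕ} (h : m ≠ m') : Disjoint (dyadicI k m) (dyadicI k m') := by
  rw [Set.disjoint_left]
  intro x hx hx'
  rw [mem_dyadicI_iff] at hx hx'
  exact h (by exact_mod_cast hx.symm.trans hx')

lemma volume_dyadicI (k m : ℕ) : volume (dyadicI k m) = ENNReal.ofReal ((2 ^ k)⁻¹) := by
  rw [dyadicI, Real.volume_Ico, two_zpow_neg]
  congr 1
  ring

lemma volume_dyadicI_prod (k m m' : ℕ) :
    volume (dyadicI k m ×ˢ dyadicI k m') = ENNReal.ofReal ((4 ^ k)⁻¹) := by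
  rw [Measure.volume_eq_prod, Measure.prod_prod, volume_dyadicI, volume_dyadicI,
    ← ENNReal.ofReal_mul (by positivity), ← mul_inv, ← mul_pow]
  norm_num

lemma volume_biUnion_dyadicI_prod (N : ℕ) (T : Finset (ℕ × ℕ)) :
    volume (⋃ ab ∈ T, dyadicI N ab.1 ×ˢ dyadicI N ab.2) = ENNReal.ofReal (#T / 4 ^ N) := by
  have hdisj :
      (T : Set (ℕ × ℕ)).PairwiseDisjoint (fun ab => dyadicI N ab.1 ×ˢ dyadicI N ab.2) :=
    fun ab _ cd _ hne => Set.disjoint_prod.mpr <| by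
      by_cases h : ab.1 = cd.1
      · exact .inr (disjoint_dyadicI fun h' => hne (Prod.ext h h'))
      · exact .inl (disjoint_dyadicI h)
  rw [measure_biUnion_finset hdisj (fun _ _ => measurableSet_Ico.prod measurableSet_Ico),
    sum_congr rfl (fun ab _ => volume_dyadicI_prod N ab.1 ab.2), sum_const, nsmul_eq_mul,
    ← ENNReal.ofReal_natCast, ← ENNReal.ofReal_mul (by positivity), div_eq_mul_inv]

lemma card_filter_product_of_card_fiber {α β : Type*} (s : Finset α) (t : Finset β)
    (Q : α × β → Prop) [DecidablePred Q] {c : ℕ}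
    (h : ∀ a ∈ s, #{b ∈ t | Q (a, b)} = c) :
    #{ab ∈ s ×ˢ t | Q ab} = #s * c := by
  rw [card_filter, sum_product, sum_congr rfl (fun a ha => by rw [← card_filter, h a ha]),
    sum_const, smul_eq_mul]

theorem level_sets_unit_square_general (n k : ℕ)
    (ε : ℕ → ℕ → ℕ → ℝ) (hε : ∀ j m m', ε j m m' = 1 ∨ ε j m m' = -1) :
    volume {p : ℝ × ℝ | p.1 ∈ Set.Ico (0:ℝ) 1 ∧ p.2 ∈ Set.Ico (0:ℝ) 1 ∧
        signedSum n ε p = (n : ℝ) + 1 - 2 * k}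
      = ENNReal.ofReal (((n+1).choose k : ℝ) / 2^(n+1)) := by
  classical
  rw [setOf_unitSquare_eq_biUnion (n + 1) _
      (fun ab => #(twistedBits (n + 1) (bitTwist n ε ab.1) ab.2) = k) ?cell,
    volume_biUnion_dyadicI_prod, card_filter_product_of_card_fiber _ _ _
      (fun a _ => card_filter_card_twistedBits_eq_choose (n + 1) k (bitTwist n ε a)), card_range]
  case cell =>
    rintro a ha b hb p ⟨hpa, hpb⟩
    rw [signedSum_eq_of_mem_dyadicI hε ha hb hpa hpb, sub_right_inj, mul_right_inj' two_ne_zero,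
      Nat.cast_inj]
  congr 1
  rw [show (4 : ℝ) ^ (n + 1) = 2 ^ (n + 1) * 2 ^ (n + 1) by rw [← mul_pow]; norm_num]
  push_cast
  field_simp

/-- On the unit square, the level set `{signedSum = n+1-2k}` has measure
`2^{-(n+1)} · C(n+1,k)` for any choice of signs. -/
theorem level_sets_unit_square (n k : ℕ) (hk : k ≤ n + 1)
    (ε : ℕ → ℕ → ℕ → ℝ) (hε : ∀ j m m', ε j m m' = 1 ∨ ε j m m' = -1) :
    volume {p : ℝ × ℝ | p.1 ∈ Set.Ico (0:ℝ) 1 ∧ p.2 ∈ Set.Ico (0:ℝ) 1 ∧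
        signedSum n ε p = (n : ℝ) + 1 - 2 * k}
      = ENNReal.ofReal (((n+1).choose k : ℝ) / 2^(n+1)) :=
  level_sets_unit_square_general n k ε hε
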